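/- arXiv:math/0010255 — 2 statements merged into one kernel-verified Lean document; each statement's English description precedes it below -/
import Mathlib

section
/- For all octonions a, b, x: (a·x) ⋅ (b·x) = |x|² (a ⋅ b). -/
noncomputable section

open Quaternion

/-- The octonions, realized as the Cayley–Dickson double of the real quaternions:
pairs of quaternions. -/
abbrev 𝕆 : Type := ℍ[ℝ] × ℍ[ℝ]

namespace Octonion

/-- Cayley–Dickson multiplication: `(a, b)·(c, d) = (a·c − conj(d)·b, d·a + b·conj(c))`. -/
def omul (x y : 𝕆) : 𝕆 :=
  (x.1 * y.1 - star y.2 * x.2, y.2 * x.1 + x.2 * star y.1)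

/-- Octonionic conjugation: `conj (a, b) = (conj a, −b)`. -/
def oconj (x : 𝕆) : 𝕆 := (star x.1, -x.2)

/-- The embedding of the reals, `r ↦ (r, 0)`. -/
def oR (r : ℝ) : 𝕆 := ((r : ℍ[ℝ]), 0)

/-- The unit octonion `1 = (1, 0)`. -/
def o1 : 𝕆 := oR 1

/-- The associator `[a,b,c] = (a·b)·c − a·(b·c)`. -/
def oassoc (a b c : 𝕆) : 𝕆 := omul (omul a b) c - omul a (omul b c)

/-- The inner product: the real number with `(a·conj b + b·conj a)/2 = (a ⋅ b)·1`. -/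
def odot (x y : 𝕆) : ℝ := (omul x (oconj y) + omul y (oconj x)).1.re / 2

/-- The squared norm `|x|²`, the real number with `x·conj x = |x|²·1`. -/
def onormSq (x : 𝕆) : ℝ := odot x x

/-- The real part of an octonion, as a real number. -/
def oreR (x : 𝕆) : ℝ := x.1.re

/-- The imaginary part `Im(x) = (x − conj x)/2`. -/
def oIm (x : 𝕆) : 𝕆 := (2:ℝ)⁻¹ • (x - oconj x)

/-- The imaginary units. -/
def oi : 𝕆 := (⟨0,1,0,0⟩, 0)
def oj : 𝕆 := (⟨0,0,1,0⟩, 0)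
def ok : 𝕆 := (⟨0,0,0,1⟩, 0)
def ol : 𝕆 := (0, 1)
def oil : 𝕆 := (0, ⟨0,1,0,0⟩)
def ojl : 𝕆 := (0, ⟨0,0,1,0⟩)
def okl : 𝕆 := (0, ⟨0,0,0,1⟩)

end Octonion

/-!
Right multiplication by `x` is additive, so the identity is the polarization in `a` of the
composition law `|a·x|² = |a|²|x|²`. Expanding the Cayley–Dickson product, the composition law
reduces to the multiplicativity of the quaternion norm, the two cross terms cancelling because
the real part is a trace: `Re(p·q) = Re(q·p)`.
-/

namespace Quaternion

theorem re_mul_comm {R : Type*} [CommRing R] (p q : ℍ[R]) :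
    (p * q).re = (q * p).re := by
  simp only [re_mul]
  ring

theorem normSq_sub {R : Type*} [CommRing R] (p q : ℍ[R]) :
    normSq (p - q) = normSq p + normSq q - 2 * (p * star q).re := by
  rw [sub_eq_add_neg, normSq_add, normSq_neg, star_neg, mul_neg, re_neg]
  ring

end Quaternion

namespace Octonion

theorem odot_eq (x y : 𝕆) : odot x y = (x.1 * star y.1).re + (x.2 * star y.2).re := by
  have h₁ : (y.1 * star x.1).re = (x.1 * star y.1).re := by
    rw [← re_star, star_mul, star_star]
  have h₂ : (star y.2 * x.2).re = (x.2 * star y.2).re := re_mul_comm _ _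
  have h₃ : (star x.2 * y.2).re = (x.2 * star y.2).re := by
    rw [re_mul_comm, ← re_star, star_mul, star_star]
  simp only [odot, omul, oconj, star_neg, neg_mul, sub_neg_eq_add, Prod.fst_add, re_add]
  linarith

theorem onormSq_eq (x : 𝕆) : onormSq x = normSq x.1 + normSq x.2 := by
  rw [onormSq, odot_eq, normSq_def, normSq_def]

theorem onormSq_add (x y : 𝕆) : onormSq (x + y) = onormSq x + onormSq y + 2 * odot x y := by
  simp only [onormSq_eq, odot_eq, Prod.fst_add, Prod.snd_add, normSq_add]
  ring

theorem omul_add_left (a b x : 𝕆) : omul (a + b) x = omul a x + omul b x := by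
  simp only [omul, Prod.fst_add, Prod.snd_add, Prod.mk_add_mk, add_mul, mul_add]
  congr 1 <;> abel

theorem onormSq_omul (a x : 𝕆) : onormSq (omul a x) = onormSq a * onormSq x := by
  have cross : (a.1 * x.1 * star (star x.2 * a.2)).re = (x.2 * a.1 * star (a.2 * star x.1)).re := by
    rw [star_mul, star_mul, star_star, star_star, mul_assoc x.2, re_mul_comm x.2]
    simp only [mul_assoc]
  simp only [onormSq_eq, omul, normSq_sub, normSq_add, map_mul, normSq_star, cross]
  ring

end Octonion

open Octonion

/-- For all octonions `a, b, x`: `(a·x) ⋅ (b·x) = |x|² (a ⋅ b)`. -/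
theorem dot_identity_two (a b x : 𝕆) :
    odot (omul a x) (omul b x) = onormSq x * odot a b := by
  have h := onormSq_omul (a + b) x
  rw [omul_add_left, onormSq_add, onormSq_add, onormSq_omul, onormSq_omul] at h
  linear_combination h / 2
end
end

section
/- Generalized characteristic equation: suppose A·v = v·λ, i.e. a·y + conj(b)·z = x·(λ − p), c·z + conj(a)·x = y·(λ − m), and b·x + conj(c)·y = z·(λ − n). Set σ := p·m + p·n + m·n − |a|² − |b|² − |c|² and δ := p·m·n + 2·Re(b·(a·c)) − n·|a|² − m·|b|² − p·|c|². Then z·(λ³ − (p+m+n)·λ² + σ·λ − δ) = b·(a·(c·z)) + conj(c)·(conj(a)·(conj(b)·z)) − (b·(a·c) + (conj(c)·conj(a))·conj(b))·z + b·[a, y, λ] + [b, a·y, λ] + [b, x, λ]·(λ − m) + conj(c)·[conj(a), x, λ] + [conj(c), conj(a)·x, λ] + [conj(c), y, λ]·(λ − p), where λ² := λ·λ and λ³ := (λ·λ)·λ. -/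
noncomputable section

open Quaternion

/-!
Right alternativity `z (λ λ) = (z λ) λ` and its consequence `z ((λ λ) λ) = ((z λ) λ) λ` turn the
left-hand side into iterated right multiplications of `z` by `λ`. Each product `x λ`, `y λ`, `z λ`
is then replaced using the eigenvalue equations; moving `λ` inside a product costs one associator,
which is where the associator terms come from. What remains collapses by
`u (ū v) = ū (u v) = |u|² v` and by `c̄ (ā b̄) = conj (b (a c)) = 2 Re (b (a c)) − b (a c)`.
-/

namespace Octonion

theorem omul_add (u v w : 𝕆) : omul u (v + w) = omul u v + omul u w := by
  refine Prod.ext ?_ ?_ <;> simp only [omul, Prod.fst_add, Prod.snd_add, mul_add, add_mul,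
    star_add] <;> abel

theorem add_omul (u v w : 𝕆) : omul (u + v) w = omul u w + omul v w := by
  refine Prod.ext ?_ ?_ <;> simp only [omul, Prod.fst_add, Prod.snd_add, mul_add, add_mul] <;>
    abel

theorem omul_sub (u v w : 𝕆) : omul u (v - w) = omul u v - omul u w := by
  refine Prod.ext ?_ ?_ <;> simp only [omul, Prod.fst_sub, Prod.snd_sub, mul_sub, sub_mul,
    star_sub] <;> abel

theorem sub_omul (u v w : 𝕆) : omul (u - v) w = omul u w - omul v w := by
  refine Prod.ext ?_ ?_ <;> simp only [omul, Prod.fst_sub, Prod.snd_sub, mul_sub, sub_mul] <;>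
    abel

theorem omul_smul (r : ℝ) (u v : 𝕆) : omul u (r • v) = r • omul u v := by
  refine Prod.ext ?_ ?_ <;> simp [omul, smul_sub, smul_add]

theorem smul_omul (r : ℝ) (u v : 𝕆) : omul (r • u) v = r • omul u v := by
  refine Prod.ext ?_ ?_ <;> simp [omul, smul_sub, smul_add]

theorem oR_omul (r : ℝ) (u : 𝕆) : omul (oR r) u = r • u := by
  refine Prod.ext ?_ ?_ <;> simp [omul, oR, Quaternion.coe_mul_eq_smul, Quaternion.mul_coe_eq_smul]

theorem omul_oR (r : ℝ) (u : 𝕆) : omul u (oR r) = r • u := by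
  refine Prod.ext ?_ ?_ <;> simp [omul, oR, Quaternion.mul_coe_eq_smul]

theorem oconj_omul (u v : 𝕆) : oconj (omul u v) = omul (oconj v) (oconj u) := by
  refine Prod.ext ?_ ?_ <;> simp [omul, oconj]

theorem oconj_eq_oR_sub (u : 𝕆) : oconj u = oR (2 * oreR u) - u :=
  Prod.ext (eq_sub_of_add_eq (Quaternion.star_add_self' _)) (zero_sub _).symm

theorem omul_oconj_omul (u v : 𝕆) : omul u (omul (oconj u) v) = onormSq u • v := by
  refine Prod.ext ?_ ?_ <;> ext <;>
    simp [omul, oconj, onormSq, odot, Quaternion.re_mul, Quaternion.imI_mul,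
      Quaternion.imJ_mul, Quaternion.imK_mul] <;> ring

theorem oconj_omul_omul (u v : 𝕆) : omul (oconj u) (omul u v) = onormSq u • v := by
  refine Prod.ext ?_ ?_ <;> ext <;>
    simp [omul, oconj, onormSq, odot, Quaternion.re_mul, Quaternion.imI_mul,
      Quaternion.imJ_mul, Quaternion.imK_mul] <;> ring

theorem omul_omul_self (z l : 𝕆) : omul z (omul l l) = omul (omul z l) l := by
  refine Prod.ext ?_ ?_ <;> ext <;>
    simp only [omul, Quaternion.re_mul, Quaternion.imI_mul, Quaternion.imJ_mul,
      Quaternion.imK_mul, Quaternion.re_sub, Quaternion.imI_sub, Quaternion.imJ_sub,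
      Quaternion.imK_sub, Quaternion.re_add, Quaternion.imI_add, Quaternion.imJ_add,
      Quaternion.imK_add, Quaternion.re_star, Quaternion.imI_star, Quaternion.imJ_star,
      Quaternion.imK_star] <;> ring

theorem omul_omul_add_omul_omul (z u v : 𝕆) :
    omul (omul z u) v + omul (omul z v) u = omul z (omul u v + omul v u) := by
  have h := omul_omul_self z (u + v)
  simp only [omul_add, add_omul, omul_omul_self] at h
  rw [omul_add]
  linear_combination (norm := abel) -h

theorem omul_omul_omul_self (z l : 𝕆) :
    omul z (omul (omul l l) l) = omul (omul (omul z l) l) l := by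
  have h := omul_omul_add_omul_omul z l (omul l l)
  rw [omul_omul_self z l, omul_omul_self (omul z l) l, omul_omul_self l l, ← two_smul ℝ,
    ← two_smul ℝ, omul_smul] at h
  exact (smul_right_injective 𝕆 two_ne_zero h).symm

end Octonion

open Octonion

/-- The generalized characteristic equation for right eigenvalues of a
`3×3` octonionic Hermitian matrix. -/
theorem generalized_characteristic_equation (p m n : ℝ) (a b c x y z lam : 𝕆)
    (h1 : omul a y + omul (oconj b) z = omul x (lam - oR p))
    (h2 : omul c z + omul (oconj a) x = omul y (lam - oR m))
    (h3 : omul b x + omul (oconj c) y = omul z (lam - oR n)) :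
    omul z (omul (omul lam lam) lam
        - omul (oR (p + m + n)) (omul lam lam)
        + omul (oR (p*m + p*n + m*n - onormSq a - onormSq b - onormSq c)) lam
        - oR (p*m*n + 2 * oreR (omul b (omul a c))
              - n * onormSq a - m * onormSq b - p * onormSq c)) =
      omul b (omul a (omul c z)) + omul (oconj c) (omul (oconj a) (omul (oconj b) z))
        - omul (omul b (omul a c) + omul (omul (oconj c) (oconj a)) (oconj b)) z
        + omul b (oassoc a y lam) + oassoc b (omul a y) lam
        + omul (oassoc b x lam) (lam - oR m)
        + omul (oconj c) (oassoc (oconj a) x lam) + oassoc (oconj c) (omul (oconj a) x) lam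
        + omul (oassoc (oconj c) y lam) (lam - oR p) := by
  have hx : omul x lam = omul a y + omul (oconj b) z + p • x := by
    rw [← sub_eq_iff_eq_add, ← omul_oR, ← omul_sub, h1]
  have hy : omul y lam = omul c z + omul (oconj a) x + m • y := by
    rw [← sub_eq_iff_eq_add, ← omul_oR, ← omul_sub, h2]
  have hz : omul z lam = omul b x + omul (oconj c) y + n • z := by
    rw [← sub_eq_iff_eq_add, ← omul_oR, ← omul_sub, h3]
  have hconj : omul (omul (oconj c) (oconj a)) (oconj b)
      = oR (2 * oreR (omul b (omul a c))) - omul b (omul a c) := by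
    rw [← oconj_omul, ← oconj_omul, oconj_eq_oR_sub]
  simp only [oassoc, hconj, omul_add, add_omul, omul_sub, sub_omul, omul_smul, smul_omul,
    omul_oR, oR_omul, omul_omul_omul_self, omul_omul_self, omul_oconj_omul, oconj_omul_omul,
    hx, hy, hz]
  module
end
end
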